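/- Let a, b ∈ ℂ with |a| = |b| = 1, Im(a) > 0, Im(b) > 0, Im(a) ≠ Im(b) and Re(a) ≠ Re(b). Then ( Im(a·conj(b)) + sgn(Re(a−b))·|a−b|·√(Im(a)·Im(b)) ) / Im(a−b), regarded as a complex number, equals ( a + b − 2·sgn(Re(a+b))·(a·b·Im(a)·Im(b))^{1/2} ) / (1 + a·b), where (·)^{1/2} denotes the principal complex square root (note that 1 + a·b ≠ 0 since Im(a) ≠ Im(b)). -/

import Mathlib

open Complex ComplexConjugate

/-!
For unimodular `a`, `b` one has `Im (a b̄) (1 + a b) = Im (a - b) (a + b)` and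
`(a + b)² = a b ‖a + b‖²`. The first identity makes `(a + b) / (1 + a b)` the real number
`Im (a b̄) / Im (a - b)`; the second identifies the principal root of `a b Im a Im b` as
`sgn (Re (a + b)) √(Im a Im b) / ‖a + b‖ · (a + b)`. With
`sgn (Re (a - b)) ‖a - b‖ ‖a + b‖ = -2 Im (a b̄)` both sides reduce to
`Im (a b̄) (1 - 2 √(Im a Im b) / ‖a + b‖) / Im (a - b)`.
-/

theorem Real.sign_mul_abs_of_mul_neg {x y : ℝ} (h : x * y < 0) : Real.sign x * |y| = -y := by
  rcases mul_neg_iff.mp h with ⟨hx, hy⟩ | ⟨hx, hy⟩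
  · rw [Real.sign_of_pos hx, abs_of_neg hy, one_mul]
  · rw [Real.sign_of_neg hx, abs_of_pos hy]; ring

theorem Real.sign_mul_of_pos {t : ℝ} (ht : 0 < t) (x : ℝ) :
    Real.sign (t * x) = Real.sign x := by
  rcases lt_trichotomy x 0 with hx | rfl | hx
  · rw [Real.sign_of_neg (mul_neg_of_pos_of_neg ht hx), Real.sign_of_neg hx]
  · rw [mul_zero]
  · rw [Real.sign_of_pos (mul_pos ht hx), Real.sign_of_pos hx]

theorem Real.sign_sq_of_ne_zero {x : ℝ} (hx : x ≠ 0) : Real.sign x ^ 2 = 1 := by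
  rcases Real.sign_apply_eq_of_ne_zero x hx with h | h <;> rw [h] <;> norm_num

theorem Complex.sq_cpow_one_half {u : ℂ} (hu : u.re ≠ 0) :
    (u ^ 2) ^ ((1 : ℂ) / 2) = Real.sign u.re * u := by
  have hσ := Real.sign_sq_of_ne_zero hu
  have hsq : u ^ 2 = (Real.sign u.re * u) ^ 2 := by
    rw [mul_pow, ← ofReal_pow, hσ, ofReal_one, one_mul]
  rw [hsq, one_div, sq_cpow_two_inv]
  simpa using Real.sign_mul_pos_of_ne_zero _ hu

section UnitCircle

variable {a b : ℂ}

theorem im_mul_conj_mul_one_add_mul (ha : ‖a‖ = 1) (hb : ‖b‖ = 1) :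
    ((a * conj b).im : ℂ) * (1 + a * b) = (a - b).im * (a + b) := by
  have ha0 : a ≠ 0 := norm_ne_zero_iff.mp (by simp [ha])
  have hb0 : b ≠ 0 := norm_ne_zero_iff.mp (by simp [hb])
  simp only [im_eq_sub_conj, map_mul, map_sub, conj_conj]
  simp only [← inv_eq_conj ha, ← inv_eq_conj hb]
  field_simp
  ring

theorem add_sq_eq_mul_mul_norm_add_sq (ha : ‖a‖ = 1) (hb : ‖b‖ = 1) :
    (a + b) ^ 2 = a * b * (‖a + b‖ : ℂ) ^ 2 := by
  have ha0 : a ≠ 0 := norm_ne_zero_iff.mp (by simp [ha])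
  have hb0 : b ≠ 0 := norm_ne_zero_iff.mp (by simp [hb])
  rw [← mul_conj', map_add, ← inv_eq_conj ha, ← inv_eq_conj hb]
  field_simp
  ring

theorem norm_sub_mul_norm_add (hab : ‖a‖ = ‖b‖) :
    ‖a - b‖ * ‖a + b‖ = 2 * |(a * conj b).im| := by
  have key : (‖a - b‖ * ‖a + b‖) ^ 2 = (2 * |(a * conj b).im|) ^ 2 := by
    have hn := sq_norm_sub_sq_re (a * conj b)
    rw [norm_mul, RCLike.norm_conj, ← hab] at hn
    rw [mul_pow, mul_pow, sq_abs, Complex.sq_norm, Complex.sq_norm, normSq_sub, normSq_add,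
      ← Complex.sq_norm, ← Complex.sq_norm, ← hab]
    linear_combination 4 * hn
  exact (pow_left_inj₀ (by positivity) (by positivity) two_ne_zero).mp key

theorem re_sub_mul_im_mul_conj_neg (ha : ‖a‖ = 1) (hb : ‖b‖ = 1) (hia : 0 < a.im)
    (hib : 0 < b.im) (hre : a.re ≠ b.re) : (a - b).re * (a * conj b).im < 0 := by
  have ha' := sq_norm_sub_sq_re a
  have hb' := sq_norm_sub_sq_re b
  rw [ha] at ha'; rw [hb] at hb'
  have hpr : a.re - b.re ≠ 0 := sub_ne_zero.mpr hre
  -- `1 - Re (a * conj b) = ‖a - b‖ ^ 2 / 2 > 0`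
  have hlt : a.re * b.re + a.im * b.im < 1 := by
    nlinarith [sq_pos_of_ne_zero hpr, sq_nonneg (a.im - b.im)]
  have hid : (a - b).re * (a * conj b).im = (a.im + b.im) * (a.re * b.re + a.im * b.im - 1) := by
    simp only [sub_re, mul_im, conj_im, mul_neg, conj_re]
    linear_combination b.im * ha' + a.im * hb'
  rw [hid]
  exact mul_neg_of_pos_of_neg (by linarith) (by linarith)

theorem re_add_ne_zero (hab : ‖a‖ = ‖b‖) (hia : 0 < a.im) (hib : 0 < b.im)
    (him : a.im ≠ b.im) :
    (a + b).re ≠ 0 := by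
  have ha' := sq_norm_sub_sq_re a
  have hb' := sq_norm_sub_sq_re b
  rw [hab] at ha'
  have hnorm : (a + b).re * (a - b).re = -((a + b).im * (a - b).im) := by
    simp only [add_re, sub_re, add_im, sub_im]
    linear_combination hb' - ha'
  intro h
  rw [h, zero_mul, eq_comm, neg_eq_zero] at hnorm
  rcases mul_eq_zero.mp hnorm with h' | h'
  · rw [add_im] at h'; linarith
  · rw [sub_im, sub_eq_zero] at h'; exact him h'

theorem add_ne_zero_of_im_pos (hia : 0 < a.im) (hib : 0 < b.im) : a + b ≠ 0 := fun h =>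
  (add_pos hia hib).ne' (by simpa using congrArg im h)

theorem sign_re_sub_mul_norm_sub_mul_norm_add (ha : ‖a‖ = 1) (hb : ‖b‖ = 1) (hia : 0 < a.im)
    (hib : 0 < b.im) (hre : a.re ≠ b.re) :
    Real.sign (a - b).re * ‖a - b‖ * ‖a + b‖ = -2 * (a * conj b).im := by
  rw [mul_assoc, norm_sub_mul_norm_add (ha.trans hb.symm), mul_left_comm,
    Real.sign_mul_abs_of_mul_neg (re_sub_mul_im_mul_conj_neg ha hb hia hib hre)]
  ring

theorem sign_re_add_mul_cpow_one_half (ha : ‖a‖ = 1) (hb : ‖b‖ = 1) (hia : 0 < a.im)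
    (hib : 0 < b.im) (him : a.im ≠ b.im) :
    Real.sign (a + b).re * (a * b * a.im * b.im) ^ ((1 : ℂ) / 2) =
      ((√(a.im * b.im) / ‖a + b‖ : ℝ) : ℂ) * (a + b) := by
  set t := √(a.im * b.im) / ‖a + b‖
  have hab := add_ne_zero_of_im_pos hia hib
  have ht : 0 < t := div_pos (Real.sqrt_pos.mpr (mul_pos hia hib)) (norm_pos_iff.mpr hab)
  have hz : a * b * a.im * b.im = (t * (a + b)) ^ 2 := by
    have hg : ((√(a.im * b.im) : ℝ) : ℂ) ^ 2 = a.im * b.im := by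
      rw [← ofReal_pow, Real.sq_sqrt (mul_pos hia hib).le, ofReal_mul]
    have hP : (‖a + b‖ : ℂ) ≠ 0 := ofReal_ne_zero.mpr (norm_ne_zero_iff.mpr hab)
    rw [mul_pow, add_sq_eq_mul_mul_norm_add_sq ha hb, ofReal_div, div_pow, hg]
    field_simp
  have hre : (t * (a + b)).re = t * (a + b).re := re_ofReal_mul t (a + b)
  have hre0 := re_add_ne_zero (ha.trans hb.symm) hia hib him
  rw [hz, Complex.sq_cpow_one_half (by rw [hre]; exact mul_ne_zero ht.ne' hre0), hre,
    Real.sign_mul_of_pos ht, ← mul_assoc, ← ofReal_mul, ← sq, Real.sign_sq_of_ne_zero hre0,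
    ofReal_one, one_mul]

end UnitCircle

theorem d_formula_unit_circle (a b : ℂ)
    (ha : ‖a‖ = 1) (hb : ‖b‖ = 1)
    (hia : 0 < a.im) (hib : 0 < b.im)
    (him : a.im ≠ b.im) (hre : a.re ≠ b.re) :
    ((((a * conj b).im +
        Real.sign ((a - b).re) * ‖a - b‖ * Real.sqrt (a.im * b.im)) /
        (a - b).im : ℝ) : ℂ) =
    (a + b - 2 * (Real.sign ((a + b).re) : ℂ) *
        ((a * b * (a.im : ℂ) * (b.im : ℂ)) ^ ((1 : ℂ) / 2))) / (1 + a * b) := by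
  have hab := add_ne_zero_of_im_pos hia hib
  have hP : (‖a + b‖ : ℂ) ≠ 0 := ofReal_ne_zero.mpr (norm_ne_zero_iff.mpr hab)
  have hD : ((a - b).im : ℂ) ≠ 0 := by simpa [sub_eq_zero] using him
  have hk := im_mul_conj_mul_one_add_mul ha hb
  have hsgn := congrArg ((↑) : ℝ → ℂ)
    (sign_re_sub_mul_norm_sub_mul_norm_add ha hb hia hib hre)
  have h1ab : 1 + a * b ≠ 0 := fun h => by
    rw [h, mul_zero, eq_comm] at hk
    exact mul_ne_zero hD hab hk
  rw [mul_assoc (2 : ℂ), sign_re_add_mul_cpow_one_half ha hb hia hib him, eq_div_iff h1ab]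
  push_cast at hsgn ⊢
  field_simp
  linear_combination (‖a + b‖ - 2 * √(a.im * b.im) : ℂ) * hk
    + (√(a.im * b.im) * (1 + a * b)) * hsgn
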